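/- arXiv:2307.09467 — 2 statements merged into one kernel-verified Lean document; each statement's English description precedes it below -/
import Mathlib

section
/- F_{k,p} is a maximum likelihood estimator for the noise model P(K,b) proportional to α^{|b∩K|/|b|^{1/p}}·β^{|b∖K|/|b|^{1/p}} when α > β > 0: for every profile π, F_{k,p}(π) = argmax over size-k committees K of Π_b P(K,b)^{π(b)}. -/
open scoped ENNReal BigOperators

/-- Normalizer `|b|^{1/p}` for `p ∈ [1,∞]` (for `p = ∞` this is `|b|^0 = 1`). -/
noncomputable def wt (p : ℝ≥0∞) (card : ℕ) : ℝ := (card : ℝ) ^ (1 / p).toReal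

/-- Score of candidate `c` under profile `π`: `Σ_b π(b)·1[c∈b]/|b|^{1/p}`. -/
noncomputable def score {C : Type*} [Fintype C] [DecidableEq C]
    (p : ℝ≥0∞) (π : Finset C → ℝ) (c : C) : ℝ :=
  ∑ b : Finset C, if c ∈ b then π b / wt p b.card else 0

/-- `F_{k,p}(π)`: size-`k` committees maximizing the total score of their members. -/
noncomputable def Fkp {C : Type*} [Fintype C] [DecidableEq C]
    (k : ℕ) (p : ℝ≥0∞) (π : Finset C → ℝ) : Set (Finset C) :=
  {K | K.card = k ∧ ∀ K' : Finset C, K'.card = k →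
    ∑ c ∈ K', score p π c ≤ ∑ c ∈ K, score p π c}

/-- A profile assigns nonnegative reals to ballots (nonempty subsets of `C`),
with value `0` on the empty set. -/
def IsProfile {C : Type*} (π : Finset C → ℝ) : Prop :=
  (∀ b, 0 ≤ π b) ∧ π ∅ = 0

/-- Noise model `P(K,b) = α^{|b∩K|/|b|^{1/p}} · β^{|b∖K|/|b|^{1/p}}`. -/
noncomputable def noise {C : Type*} [DecidableEq C] (p : ℝ≥0∞) (α β : ℝ)
    (K b : Finset C) : ℝ :=
  α ^ (((b ∩ K).card : ℝ) / wt p b.card) * β ^ (((b \ K).card : ℝ) / wt p b.card)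

/-!
Taking logarithms, `log P(K,b) = (log α - log β)·|b ∩ K|/|b|^{1/p} + log β·|b|/|b|^{1/p}`,
so the log-likelihood of `K` is `log α - log β` times the total score of `K` plus a
quantity independent of `K`. Since `log α > log β`, maximizing the likelihood is
maximizing the score.
-/

section

open Finset

variable {C : Type*} [DecidableEq C]

theorem noise_pos (p : ℝ≥0∞) {α β : ℝ} (hα : 0 < α) (hβ : 0 < β) (K b : Finset C) :
    0 < noise p α β K b :=
  mul_pos (Real.rpow_pos_of_pos hα _) (Real.rpow_pos_of_pos hβ _)

theorem log_noise (p : ℝ≥0∞) {α β : ℝ} (hα : 0 < α) (hβ : 0 < β) (K b : Finset C) :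
    Real.log (noise p α β K b) =
      (Real.log α - Real.log β) * ((b ∩ K).card / wt p b.card) +
        b.card / wt p b.card * Real.log β := by
  have hcard : ((b \ K).card : ℝ) = b.card - (b ∩ K).card := by
    rw [← card_sdiff_add_card_inter b K]
    push_cast
    ring
  rw [noise, Real.log_mul (Real.rpow_pos_of_pos hα _).ne' (Real.rpow_pos_of_pos hβ _).ne',
    Real.log_rpow hα, Real.log_rpow hβ, hcard]
  ring

variable [Fintype C]

theorem sum_score_eq (p : ℝ≥0∞) (π : Finset C → ℝ) (K : Finset C) :
    ∑ c ∈ K, score p π c = ∑ b : Finset C, π b * (b ∩ K).card / wt p b.card := by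
  unfold score
  rw [sum_comm]
  refine sum_congr rfl fun b _ => ?_
  rw [sum_ite_mem, sum_const, inter_comm, nsmul_eq_mul]
  ring

theorem log_prod_noise_pow (p : ℝ≥0∞) {α β : ℝ} (hα : 0 < α) (hβ : 0 < β)
    (π : Finset C → ℕ) (K : Finset C) :
    Real.log (∏ b : Finset C, noise p α β K b ^ π b) =
      (Real.log α - Real.log β) * ∑ c ∈ K, score p (fun b => (π b : ℝ)) c +
        ∑ b : Finset C, π b * (b.card / wt p b.card * Real.log β) := by
  rw [Real.log_prod fun b _ => (pow_pos (noise_pos p hα hβ K b) _).ne', sum_score_eq, mul_sum,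
    ← sum_add_distrib]
  refine sum_congr rfl fun b _ => ?_
  rw [Real.log_pow, log_noise p hα hβ]
  ring

theorem prod_noise_pow_le_iff (p : ℝ≥0∞) {α β : ℝ} (hβ : 0 < β) (hαβ : β < α)
    (π : Finset C → ℕ) (K K' : Finset C) :
    ∏ b : Finset C, noise p α β K' b ^ π b ≤ ∏ b : Finset C, noise p α β K b ^ π b ↔
      ∑ c ∈ K', score p (fun b => (π b : ℝ)) c ≤ ∑ c ∈ K, score p (fun b => (π b : ℝ)) c := by
  have hα : 0 < α := hβ.trans hαβ
  have hprod_pos : ∀ K : Finset C, 0 < ∏ b : Finset C, noise p α β K b ^ π b :=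
    fun K => prod_pos fun b _ => pow_pos (noise_pos p hα hβ K b) _
  rw [← Real.log_le_log_iff (hprod_pos K') (hprod_pos K), log_prod_noise_pow p hα hβ,
    log_prod_noise_pow p hα hβ, add_le_add_iff_right,
    mul_le_mul_iff_right₀ (sub_pos.mpr (Real.log_lt_log hβ hαβ))]

end

theorem stmt10_general {C : Type*} [Fintype C] [DecidableEq C]
    (k : ℕ)
    (p : ℝ≥0∞)
    (α β : ℝ) (hβ : 0 < β) (hαβ : β < α)
    (π : Finset C → ℕ) :
    Fkp k p (fun b => (π b : ℝ)) =
      {K : Finset C | K.card = k ∧ ∀ K' : Finset C, K'.card = k →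
        ∏ b : Finset C, noise p α β K' b ^ π b ≤
          ∏ b : Finset C, noise p α β K b ^ π b} := by
  ext K
  simp only [Fkp, Set.mem_ofPred_eq, prod_noise_pow_le_iff p hβ hαβ]

theorem stmt10 {C : Type*} [Fintype C] [DecidableEq C]
    (k : ℕ) (hk : 1 ≤ k) (hkn : k ≤ Fintype.card C)
    (p : ℝ≥0∞) (hp : 1 ≤ p)
    (α β : ℝ) (hβ : 0 < β) (hαβ : β < α)
    (π : Finset C → ℕ) (hπ0 : π ∅ = 0) :
    Fkp k p (fun b => (π b : ℝ)) =
      {K : Finset C | K.card = k ∧ ∀ K' : Finset C, K'.card = k →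
        ∏ b : Finset C, noise p α β K' b ^ π b ≤
          ∏ b : Finset C, noise p α β K b ^ π b} :=
  stmt10_general k p α β hβ hαβ π
end

section
/- In the layered ballot graph with edge costs c({b, b∪{c}}) = 1/|b|^{1/p}, for any ballot v and any candidate c ∉ v, the closest ballot containing c (under shortest-path distance) is v ∪ {c}, at distance 1/|v|^{1/p}. -/
/-!
Every edge leaving `v` costs at least `1/|v|^{1/p}`, since the smaller endpoint has at most `|v|`
elements, so every walk leaving `v` costs at least that much; the single edge from `v` to
`v ∪ {c}` attains the bound. The infimum defining the distance is over a nonempty set because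
the graph on nonempty ballots is connected (go from `v` up to `v ∪ w`, then down to `w`).
-/

open scoped ENNReal BigOperators symmDiff

/-- Adjacency in the layered ballot graph: ballots differing in exactly one element. -/
def Adj {C : Type*} [DecidableEq C] (b b' : Finset C) : Prop := (b ∆ b').card = 1

/-- Cost of the edge between adjacent ballots: `1/|b|^{1/p}` where `b` is the smaller one. -/
noncomputable def edgeCost {C : Type*} (p : ℝ≥0∞) (b b' : Finset C) : ℝ :=
  (wt p (min b.card b'.card))⁻¹

/-- Total cost of a path, given as the list of its vertices. -/
noncomputable def pathCost {C : Type*} (p : ℝ≥0∞) : List (Finset C) → ℝ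
  | [] => 0
  | [_] => 0
  | a :: b :: l => edgeCost p a b + pathCost p (b :: l)

/-- `L` is a walk from `v` to `w` through nonempty ballots in the layered graph. -/
def IsWalk {C : Type*} [DecidableEq C] (L : List (Finset C)) (v w : Finset C) : Prop :=
  L.Chain' Adj ∧ L.head? = some v ∧ L.getLast? = some w ∧ ∀ b ∈ L, b.Nonempty

/-- Shortest-path distance between ballots in the layered graph. -/
noncomputable def gdist {C : Type*} [DecidableEq C] (p : ℝ≥0∞) (v w : Finset C) : ℝ :=
  sInf {x : ℝ | ∃ L : List (Finset C), IsWalk L v w ∧ x = pathCost p L}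

lemma wt_pos (p : ℝ≥0∞) {n : ℕ} (hn : 0 < n) : 0 < wt p n :=
  Real.rpow_pos_of_pos (by exact_mod_cast hn) _

lemma wt_mono (p : ℝ≥0∞) : Monotone (wt p) := fun _ _ h =>
  Real.rpow_le_rpow (Nat.cast_nonneg _) (by exact_mod_cast h) ENNReal.toReal_nonneg

section Cost

variable {C : Type*} (p : ℝ≥0∞)

lemma edgeCost_nonneg (b b' : Finset C) : 0 ≤ edgeCost p b b' := by
  unfold edgeCost wt
  positivity

lemma pathCost_nonneg : ∀ L : List (Finset C), 0 ≤ pathCost p L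
  | [] | [_] => le_rfl
  | a :: b :: l => add_nonneg (edgeCost_nonneg p a b) (pathCost_nonneg (b :: l))

lemma edgeCost_insert [DecidableEq C] {v : Finset C} {c : C} (hc : c ∉ v) :
    edgeCost p v (insert c v) = (wt p v.card)⁻¹ := by
  rw [edgeCost, Finset.card_insert_of_notMem hc, min_eq_left (Nat.le_succ _)]

lemma inv_wt_le_edgeCost {v b : Finset C} (hv : v.Nonempty) (hb : b.Nonempty) :
    (wt p v.card)⁻¹ ≤ edgeCost p v b :=
  inv_anti₀ (wt_pos p (lt_min hv.card_pos hb.card_pos)) (wt_mono p (min_le_left _ _))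

end Cost

section Walks

variable {C : Type*} [DecidableEq C] (p : ℝ≥0∞)

lemma adj_comm {a b : Finset C} : Adj a b ↔ Adj b a := by
  rw [Adj, Adj, symmDiff_comm]

lemma adj_insert {v : Finset C} {c : C} (hc : c ∉ v) : Adj v (insert c v) := by
  rw [Adj, symmDiff_def, Finset.insert_sdiff_cancel hc,
    Finset.sdiff_eq_empty_iff_subset.mpr (Finset.subset_insert c v)]
  simp

def NonemptyAdj (a b : Finset C) : Prop := Adj a b ∧ a.Nonempty ∧ b.Nonempty

instance : Std.Symm (NonemptyAdj (C := C)) where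
  symm _ _ h := ⟨adj_comm.mp h.1, h.2.2, h.2.1⟩

lemma reflTransGen_nonemptyAdj_union {v : Finset C} (hv : v.Nonempty) (s : Finset C) :
    Relation.ReflTransGen NonemptyAdj v (v ∪ s) := by
  induction s using Finset.induction_on with
  | empty => rw [Finset.union_empty]
  | insert c s _ ih =>
    rw [Finset.union_insert]
    by_cases hc : c ∈ v ∪ s
    · rwa [Finset.insert_eq_of_mem hc]
    · exact ih.tail
        ⟨adj_insert hc, hv.mono Finset.subset_union_left, Finset.insert_nonempty _ _⟩

lemma reflTransGen_nonemptyAdj {v w : Finset C} (hv : v.Nonempty) (hw : w.Nonempty) :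
    Relation.ReflTransGen NonemptyAdj v w := by
  have hwv := reflTransGen_nonemptyAdj_union hw v
  rw [Finset.union_comm] at hwv
  exact (reflTransGen_nonemptyAdj_union hv w).trans (Std.Symm.symm _ _ hwv)

lemma exists_isWalk {v w : Finset C} (hv : v.Nonempty) (hw : w.Nonempty) :
    ∃ L, IsWalk L v w := by
  obtain ⟨l, hchain, hlast⟩ :=
    List.exists_isChain_cons_of_relationReflTransGen (reflTransGen_nonemptyAdj hv hw)
  refine ⟨v :: l, hchain.imp fun _ _ h => h.1, rfl, ?_, ?_⟩
  · rw [List.getLast?_eq_some_getLast (List.cons_ne_nil v l), hlast]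
  rintro b (_ | ⟨_, hb⟩)
  · exact hv
  · exact hchain.cons_induction _ _ (fun _ _ h _ => h.2.2) hv b hb

lemma inv_wt_le_pathCost {L : List (Finset C)} {v w : Finset C}
    (hL : IsWalk L v w) (hvw : v ≠ w) : (wt p v.card)⁻¹ ≤ pathCost p L := by
  obtain ⟨-, hhead, hlast, hne⟩ := hL
  match L with
  | [] => simp at hhead
  | [a] => simp_all
  | a :: b :: l =>
    obtain rfl : a = v := by simpa using hhead
    calc (wt p a.card)⁻¹ ≤ edgeCost p a b :=
          inv_wt_le_edgeCost p (hne a (by simp)) (hne b (by simp))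
      _ ≤ pathCost p (a :: b :: l) := le_add_of_nonneg_right (pathCost_nonneg p _)

lemma inv_wt_le_gdist {v w : Finset C} (hv : v.Nonempty) (hw : w.Nonempty)
    (hvw : v ≠ w) : (wt p v.card)⁻¹ ≤ gdist p v w := by
  obtain ⟨L, hL⟩ := exists_isWalk hv hw
  refine le_csInf ⟨_, L, hL, rfl⟩ ?_
  rintro _ ⟨L', hL', rfl⟩
  exact inv_wt_le_pathCost p hL' hvw

lemma gdist_le_pathCost {L : List (Finset C)} {v w : Finset C} (hL : IsWalk L v w) :
    gdist p v w ≤ pathCost p L :=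
  csInf_le ⟨0, by rintro _ ⟨L', -, rfl⟩; exact pathCost_nonneg p L'⟩ ⟨L, hL, rfl⟩

lemma isWalk_pair {v w : Finset C} (hvw : Adj v w) (hv : v.Nonempty) (hw : w.Nonempty) :
    IsWalk [v, w] v w :=
  ⟨List.isChain_pair.mpr hvw, rfl, rfl, by simp [hv, hw]⟩

lemma gdist_insert {v : Finset C} (hv : v.Nonempty) {c : C} (hc : c ∉ v) :
    gdist p v (insert c v) = (wt p v.card)⁻¹ := by
  have hvc : (insert c v).Nonempty := Finset.insert_nonempty c v
  refine le_antisymm ?_ (inv_wt_le_gdist p hv hvc (Finset.ne_insert_of_notMem v v hc))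
  calc gdist p v (insert c v) ≤ pathCost p [v, insert c v] :=
        gdist_le_pathCost p (isWalk_pair (adj_insert hc) hv hvc)
    _ = (wt p v.card)⁻¹ := by simp [pathCost, edgeCost_insert p hc]

end Walks

theorem stmt14_general {C : Type*} [DecidableEq C]
    (p : ℝ≥0∞)
    (v : Finset C) (hv : v.Nonempty) (c : C) (hc : c ∉ v) :
    gdist p v (insert c v) = (wt p v.card)⁻¹ ∧
      ∀ w : Finset C, w.Nonempty → c ∈ w → gdist p v (insert c v) ≤ gdist p v w := by
  rw [gdist_insert p hv hc]
  refine ⟨rfl, fun w hw hcw => inv_wt_le_gdist p hv hw ?_⟩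
  rintro rfl
  exact hc hcw

theorem stmt14 {C : Type*} [Fintype C] [DecidableEq C]
    (p : ℝ≥0∞) (hp : 1 ≤ p)
    (v : Finset C) (hv : v.Nonempty) (c : C) (hc : c ∉ v) :
    gdist p v (insert c v) = (wt p v.card)⁻¹ ∧
      ∀ w : Finset C, w.Nonempty → c ∈ w → gdist p v (insert c v) ≤ gdist p v w :=
  stmt14_general p v hv c hc
end
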